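/- Let Cᵢ and Cⱼ be two disjoint maximal commuting Pauli classes in dimension d = 2ⁿ. Then the generators of the two classes are jointly independent; concretely, the 4ⁿ products U·V with U ∈ Cᵢ ∪ {1} and V ∈ Cⱼ ∪ {1} (where 1 is the identity matrix) are pairwise distinct up to phase, and hence every n-qubit Pauli operator is equal up to phase to exactly one such product. -/

import Mathlib

open Matrix

noncomputable section

/-- Matrices on the Hilbert space of `n` qubits, with rows and columns indexed by
bit strings `Fin n → Fin 2`. -/
abbrev QMat (n : ℕ) := Matrix (Fin n → Fin 2) (Fin n → Fin 2) ℂ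

/-- The single-qubit identity. -/
def pI : Matrix (Fin 2) (Fin 2) ℂ := 1

/-- The single-qubit Pauli X. -/
def pX : Matrix (Fin 2) (Fin 2) ℂ := !![0, 1; 1, 0]

/-- The single-qubit Pauli Y. -/
def pY : Matrix (Fin 2) (Fin 2) ℂ := !![0, -Complex.I; Complex.I, 0]

/-- The single-qubit Pauli Z. -/
def pZ : Matrix (Fin 2) (Fin 2) ℂ := !![1, 0; 0, -1]

/-- The `n`-fold Kronecker product `W 0 ⊗ ⋯ ⊗ W (n-1)`, realized on indices
`Fin n → Fin 2`. -/
def kron (n : ℕ) (W : Fin n → Matrix (Fin 2) (Fin 2) ℂ) : QMat n :=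
  fun v w => ∏ j, W j (v j) (w j)

/-- `M` is an `n`-qubit Pauli operator: an `n`-fold Kronecker product of matrices
from `{I₂, X, Y, Z}`. -/
def IsPauliOp (n : ℕ) (M : QMat n) : Prop :=
  ∃ W : Fin n → Matrix (Fin 2) (Fin 2) ℂ,
    (∀ j, W j = pI ∨ W j = pX ∨ W j = pY ∨ W j = pZ) ∧ M = kron n W

/-- Two matrices are equal up to phase if one is a nonzero scalar multiple of the other. -/
def PhaseEq {m : Type*} (A B : Matrix m m ℂ) : Prop := ∃ c : ℂ, c ≠ 0 ∧ A = c • B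

/-- A maximal commuting Pauli class in dimension `d = 2 ^ n`: a set of `d - 1`
pairwise commuting non-identity `n`-qubit Pauli operators, pairwise distinct up to phase. -/
def IsMaxClass (n : ℕ) (C : Set (QMat n)) : Prop :=
  C.Finite ∧ C.ncard = 2 ^ n - 1 ∧
  (∀ U ∈ C, IsPauliOp n U ∧ U ≠ 1) ∧
  (∀ U ∈ C, ∀ V ∈ C, U * V = V * U) ∧
  (∀ U ∈ C, ∀ V ∈ C, U ≠ V → ¬ PhaseEq U V)

/-- Two classes are disjoint if no member of one is equal up to phase to a member of the other. -/
def ClassDisjoint {n : ℕ} (C D : Set (QMat n)) : Prop :=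
  ∀ U ∈ C, ∀ V ∈ D, ¬ PhaseEq U V

/-- Two classes are equal up to phase (as sets of operators). -/
def ClassPhaseEq {n : ℕ} (C D : Set (QMat n)) : Prop :=
  (∀ U ∈ C, ∃ V ∈ D, PhaseEq U V) ∧ (∀ V ∈ D, ∃ U ∈ C, PhaseEq U V)

/-- The standard Hermitian inner product on `ι → ℂ` (conjugate-linear in the first slot). -/
def cinner {ι : Type*} [Fintype ι] (x y : ι → ℂ) : ℂ :=
  ∑ k, (starRingEnd ℂ) (x k) * y k

/-! Up to phase, an `n`-qubit Pauli operator is `X^a Z^b` for a unique label `(a, b) ∈ 𝔽₂²ⁿ`;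
multiplication adds labels, and commuting operators have labels orthogonal for the standard
symplectic form. The `2ⁿ - 1` labels of a maximal commuting class are therefore pairwise
orthogonal, so they span an isotropic subspace, of dimension at most `n`. Having at least `2ⁿ`
elements, it consists exactly of these labels and `0`, and is Lagrangian. Two disjoint classes
give Lagrangians meeting only in `0`, hence complementary in `𝔽₂²ⁿ`, so every label is uniquely
the sum of a label from each class. -/

lemma ZMod.two_cases (t : ZMod 2) : t = 0 ∨ t = 1 := by revert t; decide

namespace PhaseEq

variable {m : Type*} {A B C A' B' : Matrix m m ℂ}

lemma refl (A : Matrix m m ℂ) : PhaseEq A A := ⟨1, one_ne_zero, (one_smul ℂ A).symm⟩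

lemma symm (h : PhaseEq A B) : PhaseEq B A := by
  obtain ⟨c, hc, rfl⟩ := h
  exact ⟨c⁻¹, inv_ne_zero hc, (inv_smul_smul₀ hc B).symm⟩

lemma trans (h : PhaseEq A B) (h' : PhaseEq B C) : PhaseEq A C := by
  obtain ⟨c, hc, rfl⟩ := h
  obtain ⟨d, hd, rfl⟩ := h'
  exact ⟨c * d, mul_ne_zero hc hd, smul_smul c d C⟩

lemma mul [Fintype m] (h : PhaseEq A B) (h' : PhaseEq A' B') : PhaseEq (A * A') (B * B') := by
  obtain ⟨c, hc, rfl⟩ := h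
  obtain ⟨d, hd, rfl⟩ := h'
  exact ⟨c * d, mul_ne_zero hc hd, by rw [smul_mul_smul_comm]⟩

lemma commute [Fintype m] (hA : PhaseEq A A') (hB : PhaseEq B B') (h : Commute A B) :
    Commute A' B' := by
  obtain ⟨c, hc, rfl⟩ := hA
  obtain ⟨d, hd, rfl⟩ := hB
  rwa [Commute.smul_left_iff₀ hc, Commute.smul_right_iff₀ hd] at h

end PhaseEq

lemma kron_mul (n : ℕ) (W W' : Fin n → Matrix (Fin 2) (Fin 2) ℂ) :
    kron n W * kron n W' = kron n (fun j => W j * W' j) := by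
  ext v w
  simp only [kron, Matrix.mul_apply, ← Finset.prod_mul_distrib]
  rw [Finset.prod_univ_sum, Fintype.piFinset_univ]

lemma kron_smul (n : ℕ) (c : Fin n → ℂ) (W : Fin n → Matrix (Fin 2) (Fin 2) ℂ) :
    kron n (fun j => c j • W j) = (∏ j, c j) • kron n W := by
  ext v w
  simp [kron, Finset.prod_mul_distrib]

lemma kron_one (n : ℕ) : kron n (fun _ => 1) = 1 := by
  ext v w
  simp [kron, Matrix.one_apply, Fintype.prod_boole, funext_iff]

lemma trace_kron (n : ℕ) (W : Fin n → Matrix (Fin 2) (Fin 2) ℂ) :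
    (kron n W).trace = ∏ j, (W j).trace := by
  simp only [Matrix.trace, Matrix.diag, kron]
  rw [Finset.prod_univ_sum, Fintype.piFinset_univ]

lemma PhaseEq.kron {n : ℕ} {W W' : Fin n → Matrix (Fin 2) (Fin 2) ℂ}
    (h : ∀ j, PhaseEq (W j) (W' j)) : PhaseEq (kron n W) (kron n W') := by
  choose c hc hW using h
  refine ⟨∏ j, c j, Finset.prod_ne_zero_iff.mpr fun j _ => hc j, ?_⟩
  rw [← kron_smul, funext hW]

def chi : AddChar (ZMod 2) ℂ := AddChar.zmodChar 2 (ζ := -1) (by norm_num)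

lemma chi_one : chi 1 = -1 := by simp [chi, AddChar.zmodChar_apply, ZMod.val_one]

lemma chi_ne_zero (t : ZMod 2) : chi t ≠ 0 := by
  rcases t.two_cases with rfl | rfl <;> simp [chi_one]

lemma chi_injective : Function.Injective chi :=
  AddChar.injective_iff.mpr fun t ht => by
    rcases t.two_cases with rfl | rfl
    · rfl
    · norm_num [chi_one] at ht

lemma chi_sum {ι : Type*} (s : Finset ι) (f : ι → ZMod 2) :
    chi (∑ i ∈ s, f i) = ∏ i ∈ s, chi (f i) := by
  classical
  induction s using Finset.induction_on with
  | empty => simp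
  | insert i s hi ih =>
    rw [Finset.sum_insert hi, Finset.prod_insert hi, AddChar.map_add_eq_mul, ih]

def xzMat (a b : ZMod 2) : Matrix (Fin 2) (Fin 2) ℂ :=
  (if a = 0 then 1 else pX) * (if b = 0 then 1 else pZ)

lemma xzMat_mul (a b a' b' : ZMod 2) :
    xzMat a b * xzMat a' b' = chi (b * a') • xzMat (a + a') (b + b') := by
  rcases a.two_cases with rfl | rfl <;> rcases b.two_cases with rfl | rfl <;>
    rcases a'.two_cases with rfl | rfl <;> rcases b'.two_cases with rfl | rfl <;>
    simp +decide [xzMat, chi_one, pX, pZ, Matrix.one_fin_two]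

lemma trace_xzMat {a b : ZMod 2} (h : (a, b) ≠ 0) : (xzMat a b).trace = 0 := by
  rcases a.two_cases with rfl | rfl <;> rcases b.two_cases with rfl | rfl <;>
    simp_all +decide [xzMat, pX, pZ, Matrix.trace_fin_two]

lemma exists_phaseEq_xzMat {W : Matrix (Fin 2) (Fin 2) ℂ}
    (hW : W = pI ∨ W = pX ∨ W = pY ∨ W = pZ) :
    ∃ a b : ZMod 2, PhaseEq W (xzMat a b) ∧ ((a, b) = 0 → W = 1) := by
  rcases hW with rfl | rfl | rfl | rfl
  · exact ⟨0, 0, by simpa [xzMat, pI] using PhaseEq.refl (1 : Matrix (Fin 2) (Fin 2) ℂ), fun _ => rfl⟩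
  · exact ⟨1, 0, by simpa [xzMat] using PhaseEq.refl pX, by simp⟩
  · refine ⟨1, 1, ⟨Complex.I, Complex.I_ne_zero, ?_⟩, by simp⟩
    ext i j
    fin_cases i <;> fin_cases j <;> simp [xzMat, pX, pY, pZ]
  · exact ⟨0, 1, by simpa [xzMat] using PhaseEq.refl pZ, by simp⟩

/-- Symplectic labels of `n`-qubit Pauli operators: `p (inl j)` and `p (inr j)` are the
exponents of `X` and `Z` on qubit `j`. -/
abbrev Lab (n : ℕ) := Fin n ⊕ Fin n → ZMod 2

def xzOp (n : ℕ) (p : Lab n) : QMat n := kron n fun j => xzMat (p (.inl j)) (p (.inr j))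

def zxDot {n : ℕ} (p q : Lab n) : ZMod 2 := ∑ j, p (.inr j) * q (.inl j)

lemma lab_add_self {n : ℕ} (p : Lab n) : p + p = 0 :=
  funext fun _ => CharTwo.add_self_eq_zero _

lemma xzOp_zero (n : ℕ) : xzOp n 0 = 1 := by
  simpa [xzOp, xzMat] using kron_one n

lemma xzOp_mul {n : ℕ} (p q : Lab n) :
    xzOp n p * xzOp n q = chi (zxDot p q) • xzOp n (p + q) := by
  simp only [xzOp, kron_mul, xzMat_mul, kron_smul, zxDot, chi_sum, Pi.add_apply]

lemma trace_xzOp {n : ℕ} {p : Lab n} (hp : p ≠ 0) : (xzOp n p).trace = 0 := by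
  obtain ⟨i, hi⟩ := Function.ne_iff.mp hp
  have hj : ∃ j, (p (.inl j), p (.inr j)) ≠ 0 := by
    rcases i with j | j
    exacts [⟨j, fun h0 => hi (congrArg Prod.fst h0)⟩, ⟨j, fun h0 => hi (congrArg Prod.snd h0)⟩]
  obtain ⟨j, hj⟩ := hj
  rw [xzOp, trace_kron]
  exact Finset.prod_eq_zero (Finset.mem_univ j) (trace_xzMat hj)

lemma xzOp_ne_zero {n : ℕ} (p : Lab n) : xzOp n p ≠ 0 := fun h0 => by
  have h := xzOp_mul p p
  rw [h0, zero_mul, lab_add_self, xzOp_zero] at h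
  exact one_ne_zero ((smul_eq_zero.mp h.symm).resolve_left (chi_ne_zero _))

lemma eq_zero_of_xzOp_eq_smul_one {n : ℕ} {p : Lab n} {c : ℂ} (hc : c ≠ 0)
    (h : xzOp n p = c • 1) : p = 0 := by
  by_contra hp
  have := trace_xzOp hp
  rw [h, Matrix.trace_smul, Matrix.trace_one] at this
  simp [hc] at this

lemma phaseEq_xzOp_mul {n : ℕ} (p q : Lab n) :
    PhaseEq (xzOp n p * xzOp n q) (xzOp n (p + q)) :=
  ⟨_, chi_ne_zero _, xzOp_mul p q⟩

/-- Multiplying by `xzOp q` on the right turns `xzOp p ∼ xzOp q` into `xzOp (p + q) ∼ 1`, and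
`xzOp r` is traceless for `r ≠ 0`. -/
lemma phaseEq_xzOp_iff {n : ℕ} {p q : Lab n} : PhaseEq (xzOp n p) (xzOp n q) ↔ p = q := by
  refine ⟨fun h => ?_, fun h => h ▸ PhaseEq.refl _⟩
  obtain ⟨c, hc, hsum⟩ :=
    ((phaseEq_xzOp_mul p q).symm.trans (h.mul (PhaseEq.refl _))).trans (phaseEq_xzOp_mul q q)
  rw [lab_add_self, xzOp_zero] at hsum
  have h0 := eq_zero_of_xzOp_eq_smul_one hc hsum
  funext i
  exact CharTwo.add_eq_zero.mp (congrFun h0 i)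

lemma phaseEq_iff_of_phaseEq_xzOp {n : ℕ} {A B : QMat n} {p q : Lab n}
    (hA : PhaseEq A (xzOp n p)) (hB : PhaseEq B (xzOp n q)) : PhaseEq A B ↔ p = q :=
  ⟨fun h => phaseEq_xzOp_iff.mp ((hA.symm.trans h).trans hB),
    fun h => hA.trans (h ▸ hB.symm)⟩

def symplecticForm (n : ℕ) : LinearMap.BilinForm (ZMod 2) (Lab n) :=
  (Matrix.J (Fin n) (ZMod 2)).toBilin'

lemma toBilin'_J_apply {l R : Type*} [Fintype l] [DecidableEq l] [CommRing R] (x y : l ⊕ l → R) :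
    (Matrix.J l R).toBilin' x y = ∑ i, x (.inr i) * y (.inl i) - ∑ i, y (.inr i) * x (.inl i) := by
  simp only [Matrix.J, Matrix.toBilin'_apply', dotProduct, Matrix.fromBlocks_mulVec,
    Function.comp_def, Matrix.zero_mulVec, Matrix.neg_mulVec, Matrix.one_mulVec, zero_add, add_zero,
    Fintype.sum_sum_type, Sum.elim_inl, Sum.elim_inr, Pi.neg_apply, mul_neg,
    Finset.sum_neg_distrib, mul_comm (y _)]
  ring

lemma symplecticForm_apply {n : ℕ} (p q : Lab n) :
    symplecticForm n p q = zxDot p q - zxDot q p :=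
  toBilin'_J_apply p q

lemma symplecticForm_nondegenerate (n : ℕ) : (symplecticForm n).Nondegenerate :=
  LinearMap.BilinForm.nondegenerate_toBilin'_of_det_ne_zero' _
    (left_ne_zero_of_mul_eq_one (Matrix.J_det_mul_J_det (Fin n) (ZMod 2)))

lemma finrank_lab (n : ℕ) : Module.finrank (ZMod 2) (Lab n) = 2 * n := by
  simp [Module.finrank_fintype_fun_eq_card, two_mul]

lemma symplecticForm_eq_zero_of_commute {n : ℕ} {p q : Lab n}
    (h : Commute (xzOp n p) (xzOp n q)) : symplecticForm n p q = 0 := by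
  have h' := h.eq
  rw [xzOp_mul, xzOp_mul, add_comm q p] at h'
  rw [symplecticForm_apply, chi_injective (smul_left_injective ℂ (xzOp_ne_zero _) h'), sub_self]

lemma isPauliOp_one (n : ℕ) : IsPauliOp n 1 :=
  ⟨fun _ => pI, fun _ => Or.inl rfl, (kron_one n).symm⟩

lemma IsPauliOp.exists_phaseEq_xzOp {n : ℕ} {M : QMat n} (hM : IsPauliOp n M) :
    ∃ p : Lab n, PhaseEq M (xzOp n p) ∧ (p = 0 → M = 1) := by
  obtain ⟨W, hW, rfl⟩ := hM
  choose a b hab h1 using fun j => exists_phaseEq_xzMat (hW j)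
  refine ⟨Sum.elim a b, PhaseEq.kron hab, fun hp => ?_⟩
  have hW1 : W = fun _ => 1 := funext fun j =>
    h1 j (Prod.ext (congrFun hp (.inl j)) (congrFun hp (.inr j)))
  rw [hW1, kron_one]

open Classical in
/-- Junk value `0` for matrices that are not phase-equal to any `xzOp n p`. -/
def xzLabel {n : ℕ} (M : QMat n) : Lab n :=
  if h : ∃ p : Lab n, PhaseEq M (xzOp n p) then h.choose else 0

lemma xzLabel_eq_of_phaseEq {n : ℕ} {M : QMat n} {p : Lab n} (h : PhaseEq M (xzOp n p)) :
    xzLabel M = p := by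
  have hex : ∃ q : Lab n, PhaseEq M (xzOp n q) := ⟨p, h⟩
  rw [xzLabel, dif_pos hex]
  exact phaseEq_xzOp_iff.mp (hex.choose_spec.symm.trans h)

lemma xzLabel_one (n : ℕ) : xzLabel (1 : QMat n) = 0 :=
  xzLabel_eq_of_phaseEq (xzOp_zero n ▸ PhaseEq.refl _)

namespace IsPauliOp

variable {n : ℕ} {M U V : QMat n}

lemma phaseEq_xzOp_xzLabel (hM : IsPauliOp n M) : PhaseEq M (xzOp n (xzLabel M)) := by
  obtain ⟨p, hp, -⟩ := hM.exists_phaseEq_xzOp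
  rwa [xzLabel_eq_of_phaseEq hp]

lemma xzLabel_ne_zero (hM : IsPauliOp n M) (h1 : M ≠ 1) : xzLabel M ≠ 0 := by
  obtain ⟨p, hp, hp1⟩ := hM.exists_phaseEq_xzOp
  rw [xzLabel_eq_of_phaseEq hp]
  exact mt hp1 h1

lemma phaseEq_iff (hU : IsPauliOp n U) (hV : IsPauliOp n V) :
    PhaseEq U V ↔ xzLabel U = xzLabel V :=
  phaseEq_iff_of_phaseEq_xzOp hU.phaseEq_xzOp_xzLabel hV.phaseEq_xzOp_xzLabel

lemma phaseEq_mul (hU : IsPauliOp n U) (hV : IsPauliOp n V) :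
    PhaseEq (U * V) (xzOp n (xzLabel U + xzLabel V)) :=
  (hU.phaseEq_xzOp_xzLabel.mul hV.phaseEq_xzOp_xzLabel).trans (phaseEq_xzOp_mul _ _)

lemma symplecticForm_eq_zero (hU : IsPauliOp n U) (hV : IsPauliOp n V) (h : Commute U V) :
    symplecticForm n (xzLabel U) (xzLabel V) = 0 :=
  symplecticForm_eq_zero_of_commute
    (hU.phaseEq_xzOp_xzLabel.commute hV.phaseEq_xzOp_xzLabel h)

end IsPauliOp

section Isotropic

variable {K V : Type*} [Field K] [AddCommGroup V] [Module K V] {B : LinearMap.BilinForm K V}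

lemma span_le_orthogonal_span {S : Set V} (hS : ∀ x ∈ S, ∀ y ∈ S, B x y = 0) :
    Submodule.span K S ≤ B.orthogonal (Submodule.span K S) :=
  Submodule.span_le.mpr fun y hy => LinearMap.BilinForm.mem_orthogonal_iff.mpr fun _ hx =>
    (Submodule.span_le (p := LinearMap.ker (B.flip y))).mpr (fun x' hx' => hS x' hx' y hy) hx

lemma two_mul_finrank_le_of_le_orthogonal [FiniteDimensional K V] (hB : B.Nondegenerate)
    {W : Submodule K V} (hW : W ≤ B.orthogonal W) :
    2 * Module.finrank K W ≤ Module.finrank K V := by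
  have h := Submodule.finrank_mono hW
  rw [LinearMap.BilinForm.finrank_orthogonal hB] at h
  have := Submodule.finrank_le W
  omega

lemma ncard_submodule [Finite K] [FiniteDimensional K V] (W : Submodule K V) :
    (W : Set V).ncard = Nat.card K ^ Module.finrank K W := by
  rw [← Nat.card_coe_set_eq, SetLike.coe_sort_coe, Module.natCard_eq_pow_finrank (K := K)]

lemma coe_span_eq_insert_zero [Finite K] [FiniteDimensional K V] (hB : B.Nondegenerate)
    {m : ℕ} (hV : Module.finrank K V = 2 * m) {S : Set V}
    (hS : ∀ x ∈ S, ∀ y ∈ S, B x y = 0) (hcard : (insert 0 S).ncard = Nat.card K ^ m) :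
    (Submodule.span K S : Set V) = insert 0 S ∧ Module.finrank K (Submodule.span K S) = m := by
  have : Finite V := Module.finite_of_finite K
  have hK : 1 < Nat.card K := Finite.one_lt_card
  have hdim := two_mul_finrank_le_of_le_orthogonal hB (span_le_orthogonal_span hS)
  have hsub : insert 0 S ⊆ Submodule.span K S :=
    Set.insert_subset (Submodule.zero_mem _) Submodule.subset_span
  have heq : insert 0 S = Submodule.span K S := by
    refine Set.eq_of_subset_of_ncard_le hsub ?_ (Set.toFinite _)
    rw [ncard_submodule, hcard]
    exact Nat.pow_le_pow_right hK.le (by omega)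
  refine ⟨heq.symm, Nat.pow_right_injective hK ?_⟩
  simp only [← ncard_submodule, ← heq, hcard]

end Isotropic

lemma Submodule.eq_of_add_eq_add_of_disjoint {R M : Type*} [Ring R] [AddCommGroup M] [Module R M]
    {p q : Submodule R M} (h : Disjoint p q) {x x' y y' : M} (hx : x ∈ p) (hx' : x' ∈ p)
    (hy : y ∈ q) (hy' : y' ∈ q) (e : x + y = x' + y') : x = x' ∧ y = y' := by
  have hd : x - x' = y' - y := by rw [sub_eq_sub_iff_add_eq_add, e, add_comm]
  have h0 : x - x' = 0 := Submodule.disjoint_def.mp h _ (p.sub_mem hx hx') (hd ▸ q.sub_mem hy' hy)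
  rw [h0] at hd
  exact ⟨sub_eq_zero.mp h0, (sub_eq_zero.mp hd.symm).symm⟩

def labelSpace {n : ℕ} (C : Set (QMat n)) : Submodule (ZMod 2) (Lab n) :=
  Submodule.span (ZMod 2) (xzLabel '' C)

namespace IsMaxClass

variable {n : ℕ} {C : Set (QMat n)}

lemma isPauliOp (hC : IsMaxClass n C) {U : QMat n} (hU : U ∈ insert 1 C) : IsPauliOp n U := by
  rcases hU with rfl | hU
  exacts [isPauliOp_one n, (hC.2.2.1 U hU).1]

lemma injOn_xzLabel (hC : IsMaxClass n C) : Set.InjOn xzLabel (insert 1 C) := by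
  have hne : ∀ U ∈ C, xzLabel U ≠ xzLabel 1 := fun U hU => by
    rw [xzLabel_one]
    exact (hC.2.2.1 U hU).1.xzLabel_ne_zero (hC.2.2.1 U hU).2
  rintro U (rfl | hU) U' (rfl | hU') h
  · rfl
  · exact absurd h.symm (hne U' hU')
  · exact absurd h (hne U hU)
  · by_contra hUU'
    exact hC.2.2.2.2 U hU U' hU' hUU'
      (((hC.2.2.1 U hU).1.phaseEq_iff (hC.2.2.1 U' hU').1).mpr h)

lemma ncard_insert_zero_image_xzLabel (hC : IsMaxClass n C) :
    (insert 0 (xzLabel '' C)).ncard = 2 ^ n := by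
  have h0 : 0 ∉ xzLabel '' C := fun ⟨U, hU, h⟩ =>
    (hC.2.2.1 U hU).1.xzLabel_ne_zero (hC.2.2.1 U hU).2 h
  rw [Set.ncard_insert_of_notMem h0 (hC.1.image _),
    (hC.injOn_xzLabel.mono (Set.subset_insert 1 C)).ncard_image, hC.2.1]
  have := Nat.one_le_two_pow (n := n)
  omega

lemma coe_labelSpace (hC : IsMaxClass n C) :
    (labelSpace C : Set (Lab n)) = xzLabel '' insert 1 C ∧ Module.finrank (ZMod 2) (labelSpace C) = n := by
  have hS : ∀ p ∈ xzLabel '' C, ∀ q ∈ xzLabel '' C, symplecticForm n p q = 0 := by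
    rintro _ ⟨U, hU, rfl⟩ _ ⟨V, hV, rfl⟩
    exact (hC.2.2.1 U hU).1.symplecticForm_eq_zero (hC.2.2.1 V hV).1 (hC.2.2.2.1 U hU V hV)
  rw [Set.image_insert_eq, xzLabel_one]
  refine coe_span_eq_insert_zero (symplecticForm_nondegenerate n) (finrank_lab n) hS ?_
  rw [Nat.card_zmod]
  exact hC.ncard_insert_zero_image_xzLabel

lemma bijOn_xzLabel (hC : IsMaxClass n C) : Set.BijOn xzLabel (insert 1 C) (labelSpace C) :=
  hC.coe_labelSpace.1 ▸ hC.injOn_xzLabel.bijOn_image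

lemma finrank_labelSpace (hC : IsMaxClass n C) : Module.finrank (ZMod 2) (labelSpace C) = n :=
  hC.coe_labelSpace.2

end IsMaxClass

lemma ClassDisjoint.disjoint_labelSpace {n : ℕ} {Ci Cj : Set (QMat n)} (hi : IsMaxClass n Ci)
    (hj : IsMaxClass n Cj) (hd : ClassDisjoint Ci Cj) : Disjoint (labelSpace Ci) (labelSpace Cj) := by
  refine Submodule.disjoint_def.mpr fun x hxi hxj => ?_
  obtain ⟨U, hU, rfl⟩ := hi.bijOn_xzLabel.surjOn hxi
  obtain ⟨V, hV, hUV⟩ := hj.bijOn_xzLabel.surjOn hxj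
  rcases hU with rfl | hU
  · exact xzLabel_one n
  rcases hV with rfl | hV
  · exact hUV.symm.trans (xzLabel_one n)
  exact absurd (((hi.isPauliOp (.inr hU)).phaseEq_iff (hj.isPauliOp (.inr hV))).mpr hUV.symm)
    (hd U hU V hV)

/-- For two disjoint maximal commuting Pauli classes `Ci`, `Cj` in `d = 2 ^ n`,
the `4 ^ n` products `U * V` with `U ∈ Ci ∪ {1}` and `V ∈ Cj ∪ {1}` are pairwise distinct
up to phase, and every `n`-qubit Pauli operator is equal up to phase to such a product. -/
theorem two_classes_generate (n : ℕ) (Ci Cj : Set (QMat n))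
    (hi : IsMaxClass n Ci) (hj : IsMaxClass n Cj) (hd : ClassDisjoint Ci Cj) :
    (∀ U ∈ insert (1 : QMat n) Ci, ∀ V ∈ insert (1 : QMat n) Cj,
      ∀ U' ∈ insert (1 : QMat n) Ci, ∀ V' ∈ insert (1 : QMat n) Cj,
        PhaseEq (U * V) (U' * V') → U = U' ∧ V = V') ∧
    (∀ M : QMat n, IsPauliOp n M →
      ∃ U ∈ insert (1 : QMat n) Ci, ∃ V ∈ insert (1 : QMat n) Cj, PhaseEq M (U * V)) := by
  have hdisj := hd.disjoint_labelSpace hi hj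
  have hcompl : IsCompl (labelSpace Ci) (labelSpace Cj) :=
    (Submodule.isCompl_iff_disjoint _ _ (by
      rw [finrank_lab, hi.finrank_labelSpace, hj.finrank_labelSpace, two_mul])).mpr hdisj
  constructor
  · intro U hU V hV U' hU' V' hV' h
    rw [phaseEq_iff_of_phaseEq_xzOp ((hi.isPauliOp hU).phaseEq_mul (hj.isPauliOp hV))
      ((hi.isPauliOp hU').phaseEq_mul (hj.isPauliOp hV'))] at h
    obtain ⟨hUU', hVV'⟩ := Submodule.eq_of_add_eq_add_of_disjoint hdisj (hi.bijOn_xzLabel.mapsTo hU)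
      (hi.bijOn_xzLabel.mapsTo hU') (hj.bijOn_xzLabel.mapsTo hV) (hj.bijOn_xzLabel.mapsTo hV') h
    exact ⟨hi.bijOn_xzLabel.injOn hU hU' hUU', hj.bijOn_xzLabel.injOn hV hV' hVV'⟩
  · intro M hM
    obtain ⟨u, v, huv, -⟩ := Submodule.existsUnique_add_of_isCompl hcompl (xzLabel M)
    obtain ⟨U, hU, hUu⟩ := hi.bijOn_xzLabel.surjOn u.2
    obtain ⟨V, hV, hVv⟩ := hj.bijOn_xzLabel.surjOn v.2
    refine ⟨U, hU, V, hV, hM.phaseEq_xzOp_xzLabel.trans ?_⟩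
    rw [← huv, ← hUu, ← hVv]
    exact ((hi.isPauliOp hU).phaseEq_mul (hj.isPauliOp hV)).symm

end
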